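/- arXiv:1701.05173 — 2 statements merged into one kernel-verified Lean document; each statement's English description precedes it below -/
import Mathlib

section
/- Let 𝔷(2l) = 8^l (3l−4)!/((l−2)!(2l)!) for integers l ≥ 2. Let (l_j) be a sequence of integers tending to infinity and (w_j) a sequence of even integers with w_j ≥ −2l_j + 4 such that w_j + 2l_j → ∞ as j → ∞. Then the ratio 54^{−w_j/2} · 𝔷(w_j + 2l_j) / 𝔷(2l_j), divided by (w_j/(2l_j) + 1)^{−5/2}, converges to 1 as j → ∞. -/
open Filter

/-- The free Boltzmann partition function `𝔷(2l) = 8^l (3l−4)!/((l−2)!(2l)!)`,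
as a function of `l`; i.e. `fbZ l = 𝔷(2l)`. -/
noncomputable def fbZ (l : ℕ) : ℝ :=
  8 ^ l * (Nat.factorial (3 * l - 4)) / (Nat.factorial (l - 2) * Nat.factorial (2 * l))

/-!
By Stirling's formula `𝔷(2l) · l^{5/2} / 54^l` converges to a positive constant: in its logarithm
the linear terms of `log (3l-4)! - log (l-2)! - log (2l)!` cancel against `l log 8 - l log 54`, the
`-(5/2) log l` cancels, and what is left are Stirling factors and terms `(x + c) log (1 + t/x)`,
all convergent. With `m = (w + 2l)/2` the ratio in question is the quotient of this normalised
sequence at `m` and at `l`, so it tends to `1`.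
-/

open Real

lemma log_factorial_eq_log_stirlingSeq (n : ℕ) :
    log n.factorial = log (Stirling.stirlingSeq n) + log (2 * n) / 2 + n * (log n - 1) := by
  rw [Stirling.log_stirlingSeq_formula]
  rcases n.eq_zero_or_pos with rfl | hn
  · simp
  · rw [log_div (by positivity) (exp_ne_zero 1), log_exp]
    ring

lemma tendsto_add_mul_log_one_add_div (t c : ℝ) :
    Tendsto (fun x : ℝ ↦ (x + c) * log (1 + t / x)) atTop (nhds t) := by
  have hlog : Tendsto (fun x : ℝ ↦ log (1 + t / x)) atTop (nhds 0) := by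
    simpa using ((tendsto_const_nhds.div_atTop tendsto_id).const_add 1).log (by norm_num)
  simpa [add_mul] using (tendsto_mul_log_one_add_div_atTop t).add (hlog.const_mul c)

lemma fbZ_pos (l : ℕ) : 0 < fbZ l := by unfold fbZ; positivity

noncomputable def fbZScaled (l : ℕ) : ℝ := fbZ l * (l : ℝ) ^ ((5 : ℝ) / 2) / 54 ^ l

lemma fbZScaled_pos {l : ℕ} (hl : 0 < l) : 0 < fbZScaled l := by
  have := fbZ_pos l
  unfold fbZScaled
  positivity

-- The shifts `-7/2` and `-3/2` absorb the square-root factors `√(2n)` of Stirling's formula.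
noncomputable def fbZLogCorrection (x : ℝ) : ℝ :=
  (3 * x - 7 / 2) * log (1 - 4 / (3 * x)) - (x - 3 / 2) * log (1 - 2 / x)

lemma tendsto_fbZLogCorrection : Tendsto fbZLogCorrection atTop (nhds (-2)) := by
  have hA := (tendsto_add_mul_log_one_add_div (-4) (-7 / 2)).comp
    (tendsto_id.const_mul_atTop (show (0 : ℝ) < 3 by norm_num))
  have hB := tendsto_add_mul_log_one_add_div (-2) (-3 / 2)
  convert hA.sub hB using 1
  · ext x
    simp only [fbZLogCorrection, Function.comp, id, neg_div]
    ring_nf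
  · norm_num

lemma log_fbZScaled {l : ℕ} (hl : 3 ≤ l) :
    log (fbZScaled l) = log (Stirling.stirlingSeq (3 * l - 4))
      - log (Stirling.stirlingSeq (l - 2)) - log (Stirling.stirlingSeq (2 * l))
      + (2 - 4 * log 3 + log (3 / 4) / 2) + fbZLogCorrection l := by
  have hx : (3 : ℝ) ≤ l := by exact_mod_cast hl
  have hl0 : (l : ℝ) ≠ 0 := by positivity
  have hA : 0 < 1 - 4 / (3 * (l : ℝ)) := by rw [sub_pos, div_lt_one (by linarith)]; linarith
  have hB : 0 < 1 - 2 / (l : ℝ) := by rw [sub_pos, div_lt_one (by linarith)]; linarith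
  have h3l4 : ((3 * l - 4 : ℕ) : ℝ) = 3 * l - 4 := by rw [Nat.cast_sub (by omega)]; push_cast; ring
  have hl2 : ((l - 2 : ℕ) : ℝ) = l - 2 := by rw [Nat.cast_sub (by omega)]; push_cast; ring
  have h2l : ((2 * l : ℕ) : ℝ) = 2 * l := by push_cast; ring
  have hlog3l4 : log (3 * l - 4) = log 3 + log l + log (1 - 4 / (3 * l)) := by
    rw [← log_mul (by positivity) (by positivity), ← log_mul (by positivity) hA.ne']
    congr 1; field_simp
  have hlogl2 : log (l - 2) = log l + log (1 - 2 / l) := by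
    rw [← log_mul (by positivity) hB.ne']
    congr 1; field_simp
  have hlog : log (fbZScaled l) = l * log 8 + log (3 * l - 4).factorial
      - log (l - 2).factorial - log (2 * l).factorial + 5 / 2 * log l - l * log 54 := by
    have := fbZ_pos l
    rw [fbZScaled, log_div (by positivity) (by positivity), log_mul (by positivity) (by positivity),
      log_rpow (by positivity), log_pow, fbZ, log_div (by positivity) (by positivity),
      log_mul (by positivity) (by positivity), log_mul (by positivity) (by positivity), log_pow]
    ring
  have h8 : log 8 = 3 * log 2 := by
    rw [show (8 : ℝ) = 2 ^ 3 by norm_num, log_pow]; norm_num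
  have h54 : log 54 = log 2 + 3 * log 3 := by
    rw [show (54 : ℝ) = 2 * 3 ^ 3 by norm_num, log_mul (by norm_num) (by norm_num), log_pow]; norm_num
  have h34 : log (3 / 4) = log 3 - 2 * log 2 := by
    rw [show (3 / 4 : ℝ) = 3 / 2 ^ 2 by norm_num, log_div (by norm_num) (by norm_num), log_pow]; norm_num
  have h2l' : log (2 * l) = log 2 + log l := log_mul two_ne_zero hl0
  have h4l : log (2 * (2 * l)) = 2 * log 2 + log l := by
    rw [log_mul two_ne_zero (by positivity), h2l']; ring
  simp only [hlog, log_factorial_eq_log_stirlingSeq, h3l4, hl2, h2l, fbZLogCorrection]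
  rw [log_mul two_ne_zero (by linarith), log_mul two_ne_zero (by linarith), hlog3l4, hlogl2,
    h4l, h2l', h8, h54, h34]
  ring

lemma exists_tendsto_fbZScaled : ∃ c, 0 < c ∧ Tendsto fbZScaled atTop (nhds c) := by
  have hs : Tendsto (fun n ↦ log (Stirling.stirlingSeq n)) atTop (nhds (log √π)) :=
    Stirling.tendsto_stirlingSeq_sqrt_pi.log (by positivity)
  have h3l4 : Tendsto (fun l : ℕ ↦ 3 * l - 4) atTop atTop :=
    tendsto_atTop_mono (fun l ↦ by omega) (tendsto_sub_atTop_nat 4)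
  have h2l : Tendsto (fun l : ℕ ↦ 2 * l) atTop atTop :=
    tendsto_atTop_mono (fun l ↦ by dsimp only [id]; omega) tendsto_id
  have hlog := ((((hs.comp h3l4).sub (hs.comp (tendsto_sub_atTop_nat 2))).sub
    (hs.comp h2l)).add (tendsto_const_nhds (x := 2 - 4 * log 3 + log (3 / 4) / 2))).add
    (tendsto_fbZLogCorrection.comp tendsto_natCast_atTop_atTop)
  refine ⟨_, exp_pos _, hlog.rexp.congr' ?_⟩
  filter_upwards [eventually_ge_atTop 3] with l hl
  simp only [Function.comp_apply]
  rw [← log_fbZScaled hl, exp_log (fbZScaled_pos (by omega))]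

lemma fbZ_ratio_eq_fbZScaled_div {l m : ℕ} (hl : 0 < l) (hm : 0 < m) {w : ℝ}
    (hw : w = 2 * m - 2 * l) :
    (54 : ℝ) ^ (-w / 2) * fbZ m / fbZ l / (w / (2 * l) + 1) ^ (-(5 : ℝ) / 2)
      = fbZScaled m / fbZScaled l := by
  have hl' : (0 : ℝ) < l := by exact_mod_cast hl
  have hm' : (0 : ℝ) < m := by exact_mod_cast hm
  have hbase : w / (2 * l) + 1 = m / l := by rw [hw]; field_simp; ring
  have h54 : (54 : ℝ) ^ (-w / 2) = 54 ^ l / 54 ^ m := by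
    rw [show -w / 2 = (l : ℝ) - m by rw [hw]; ring, rpow_sub (by norm_num), rpow_natCast,
      rpow_natCast]
  rw [hbase, h54, show -(5 : ℝ) / 2 = -(5 / 2) by ring, rpow_neg (by positivity),
    div_rpow hm'.le hl'.le, fbZScaled, fbZScaled]
  have := fbZ_pos l
  have := fbZ_pos m
  field_simp

theorem fbZ_ratio_asymptotics_general (l : ℕ → ℕ) (w : ℕ → ℤ)
    (hl : Tendsto l atTop atTop)
    (hw_even : ∀ j, Even (w j))
    (hsum : Tendsto (fun j => w j + 2 * (l j : ℤ)) atTop atTop) :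
    Tendsto (fun j =>
      ((54 : ℝ) ^ (-(w j : ℝ) / 2) * fbZ ((w j + 2 * (l j : ℤ)) / 2).toNat / fbZ (l j)) /
        ((w j : ℝ) / (2 * (l j : ℝ)) + 1) ^ (-(5 : ℝ) / 2))
      atTop (nhds 1) := by
  obtain ⟨c, hc, hg⟩ := exists_tendsto_fbZScaled
  set m : ℕ → ℕ := fun j => ((w j + 2 * (l j : ℤ)) / 2).toNat
  have hm_eq : ∀ᶠ j in atTop, (m j : ℤ) * 2 = w j + 2 * l j := by
    filter_upwards [hsum.eventually_ge_atTop 0] with j hj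
    obtain ⟨k, hk⟩ := hw_even j
    simp only [m]
    omega
  have hm : Tendsto m atTop atTop := tendsto_atTop.2 fun b ↦ by
    filter_upwards [hm_eq, hsum.eventually_ge_atTop (2 * b)] with j hj hjb
    omega
  have hlim := (hg.comp hm).div (hg.comp hl) hc.ne'
  rw [div_self hc.ne'] at hlim
  refine hlim.congr' ?_
  filter_upwards [hm_eq, hl.eventually_gt_atTop 0, hm.eventually_gt_atTop 0] with j hj hlj hmj
  refine (fbZ_ratio_eq_fbZScaled_div hlj hmj ?_).symm
  exact_mod_cast (by omega : w j = 2 * (m j : ℤ) - 2 * l j)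

/-- If `l_j → ∞` and `w_j` are even with `w_j ≥ -2l_j + 4` and
`w_j + 2l_j → ∞`, then `54^{-w_j/2} 𝔷(w_j + 2l_j)/𝔷(2l_j)` is asymptotic to
`(w_j/(2l_j) + 1)^{-5/2}`. -/
theorem fbZ_ratio_asymptotics (l : ℕ → ℕ) (w : ℕ → ℤ)
    (hl : Tendsto l atTop atTop)
    (hw_even : ∀ j, Even (w j))
    (hw_lb : ∀ j, -2 * (l j : ℤ) + 4 ≤ w j)
    (hsum : Tendsto (fun j => w j + 2 * (l j : ℤ)) atTop atTop) :
    Tendsto (fun j =>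
      ((54 : ℝ) ^ (-(w j : ℝ) / 2) * fbZ ((w j + 2 * (l j : ℤ)) / 2).toNat / fbZ (l j)) /
        ((w j : ℝ) / (2 * (l j : ℝ)) + 1) ^ (-(5 : ℝ) / 2))
      atTop (nhds 1) :=
  fbZ_ratio_asymptotics_general l w hl hw_even hsum
end

section
/- There is a universal constant C > 0 such that for all integers m_L, m_R ≥ 1, Σ_{k_L = ⌈m_L/2⌉}^{m_L} Σ_{k_R = ⌈m_R/2⌉}^{m_R} (k_L + k_R)^{3/2} k_L^{−5/2} k_R^{−5/2} (m_L + m_R − k_L − k_R + 1)^{−5/2} ≤ C (m_L + m_R)^{3/2} m_L^{−5/2} m_R^{−5/2}. -/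
/-!
On the summation range `k ≥ m / 2`, so `k ^ (-5/2) ≤ 2 ^ (5/2) m ^ (-5/2)`, and
`(k_L + k_R) ^ (3/2) ≤ (m_L + m_R) ^ (3/2)`. With `x = m_L - k_L + 1 ≥ 1` and
`y = m_R - k_R + 1 ≥ 1` we have `x + y - 1 ≥ √(x y)`, so the last factor is at most
`x ^ (-5/4) y ^ (-5/4)`. The double sum is thus dominated by a product of two single sums,
each bounded by `∑ n ^ (-5/4) < ∞`.
-/

open Finset Real

lemma rpow_neg_le_two_rpow_mul_rpow_neg {k m a : ℝ} (hm : 0 < m) (hk : m ≤ 2 * k)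
    (ha : 0 ≤ a) :
    k ^ (-a) ≤ 2 ^ a * m ^ (-a) :=
  calc k ^ (-a) ≤ (m / 2) ^ (-a) :=
        rpow_le_rpow_of_nonpos (by positivity) (by linarith) (by linarith)
    _ = 2 ^ a * m ^ (-a) := by
      rw [div_rpow hm.le zero_le_two, rpow_neg zero_le_two, div_eq_mul_inv, inv_inv, mul_comm]

lemma add_sub_one_rpow_neg_two_mul_le {x y a : ℝ} (hx : 1 ≤ x) (hy : 1 ≤ y) (ha : 0 ≤ a) :
    (x + y - 1) ^ (-(2 * a)) ≤ x ^ (-a) * y ^ (-a) := by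
  have hxy : x * y ≤ (x + y - 1) ^ 2 := by
    nlinarith [mul_nonneg (sub_nonneg.2 hx) (sub_nonneg.2 hy)]
  calc (x + y - 1) ^ (-(2 * a)) = ((x + y - 1) ^ 2) ^ (-a) := by
        rw [← rpow_natCast, ← rpow_mul (by linarith)]; push_cast; ring_nf
    _ ≤ (x * y) ^ (-a) := rpow_le_rpow_of_nonpos (by positivity) hxy (by linarith)
    _ = x ^ (-a) * y ^ (-a) := mul_rpow (by linarith) (by linarith)

lemma overshoot_term_le {kL kR mL mR p q : ℝ} (hmL : 0 < mL) (hmR : 0 < mR)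
    (hkL : mL ≤ 2 * kL) (hkR : mR ≤ 2 * kR) (hkmL : kL ≤ mL) (hkmR : kR ≤ mR)
    (hp : 0 ≤ p) (hq : 0 ≤ q) :
    (kL + kR) ^ p * kL ^ (-q) * kR ^ (-q) * (mL + mR - kL - kR + 1) ^ (-q) ≤
      2 ^ (2 * q) * ((mL + mR) ^ p * mL ^ (-q) * mR ^ (-q)) *
        ((mL - kL + 1) ^ (-(q / 2)) * (mR - kR + 1) ^ (-(q / 2))) := by
  have hsum : (kL + kR) ^ p ≤ (mL + mR) ^ p := rpow_le_rpow (by linarith) (by linarith) hp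
  have hL := rpow_neg_le_two_rpow_mul_rpow_neg hmL hkL hq
  have hR := rpow_neg_le_two_rpow_mul_rpow_neg hmR hkR hq
  have hgap : (mL + mR - kL - kR + 1) ^ (-q) ≤
      (mL - kL + 1) ^ (-(q / 2)) * (mR - kR + 1) ^ (-(q / 2)) := by
    have := add_sub_one_rpow_neg_two_mul_le (x := mL - kL + 1) (y := mR - kR + 1)
      (by linarith) (by linarith) (by linarith : 0 ≤ q / 2)
    convert this using 2 <;> ring
  calc (kL + kR) ^ p * kL ^ (-q) * kR ^ (-q) * (mL + mR - kL - kR + 1) ^ (-q)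
      ≤ (mL + mR) ^ p * (2 ^ q * mL ^ (-q)) * (2 ^ q * mR ^ (-q)) *
          ((mL - kL + 1) ^ (-(q / 2)) * (mR - kR + 1) ^ (-(q / 2))) := by
        have : 0 < kL := by linarith
        have : 0 < kR := by linarith
        gcongr
        exact rpow_nonneg (by linarith) _
    _ = _ := by rw [two_mul, rpow_add zero_lt_two]; ring

lemma summable_nat_add_one_rpow_neg {r : ℝ} (hr : 1 < r) :
    Summable fun n : ℕ => ((n : ℝ) + 1) ^ (-r) := by
  simpa using (summable_nat_add_iff 1).mpr (summable_nat_rpow.mpr (by linarith : -r < -1))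

lemma sum_comp_tsub_le_tsum {f : ℕ → ℝ} (hf : Summable f) (h0 : ∀ n, 0 ≤ f n)
    {s : Finset ℕ} {m : ℕ} (hs : ∀ k ∈ s, k ≤ m) : ∑ k ∈ s, f (m - k) ≤ ∑' n, f n := by
  rw [← Finset.sum_image (g := (m - ·)) fun a ha b hb hab => by
    have := hs a ha; have := hs b hb; simp only at hab; omega]
  exact hf.sum_le_tsum _ fun n _ => h0 n

lemma overshoot_term_le_nat {kL kR mL mR : ℕ} (hmL : 1 ≤ mL) (hmR : 1 ≤ mR)
    (hkL : kL ∈ Icc ((mL + 1) / 2) mL) (hkR : kR ∈ Icc ((mR + 1) / 2) mR) :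
    ((kL : ℝ) + (kR : ℝ)) ^ ((3 : ℝ) / 2) * (kL : ℝ) ^ (-(5 : ℝ) / 2) *
          (kR : ℝ) ^ (-(5 : ℝ) / 2) *
          ((mL : ℝ) + (mR : ℝ) - (kL : ℝ) - (kR : ℝ) + 1) ^ (-(5 : ℝ) / 2) ≤
      32 * (((mL : ℝ) + (mR : ℝ)) ^ ((3 : ℝ) / 2) * (mL : ℝ) ^ (-(5 : ℝ) / 2) *
          (mR : ℝ) ^ (-(5 : ℝ) / 2)) *
        ((((mL - kL : ℕ) : ℝ) + 1) ^ (-(5 / 4 : ℝ)) *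
          (((mR - kR : ℕ) : ℝ) + 1) ^ (-(5 / 4 : ℝ))) := by
  rw [mem_Icc] at hkL hkR
  have h := overshoot_term_le (p := 3 / 2) (q := 5 / 2) (kL := kL) (kR := kR) (mL := mL)
    (mR := mR) (by exact_mod_cast hmL) (by exact_mod_cast hmR)
    (by exact_mod_cast (by omega : mL ≤ 2 * kL)) (by exact_mod_cast (by omega : mR ≤ 2 * kR))
    (by exact_mod_cast hkL.2) (by exact_mod_cast hkR.2) (by norm_num) (by norm_num)
  rw [Nat.cast_sub hkL.2, Nat.cast_sub hkR.2, neg_div]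
  convert h using 3 <;> norm_num

/-- A universal bound for the double sum over overshoots:
`Σ_{k_L=⌈m_L/2⌉}^{m_L} Σ_{k_R=⌈m_R/2⌉}^{m_R} (k_L+k_R)^{3/2} k_L^{-5/2} k_R^{-5/2}
(m_L+m_R−k_L−k_R+1)^{-5/2} ≤ C (m_L+m_R)^{3/2} m_L^{-5/2} m_R^{-5/2}`. -/
theorem overshoot_double_sum_bound :
    ∃ C : ℝ, 0 < C ∧ ∀ mL mR : ℕ, 1 ≤ mL → 1 ≤ mR →
      ∑ kL ∈ Finset.Icc ((mL + 1) / 2) mL, ∑ kR ∈ Finset.Icc ((mR + 1) / 2) mR,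
        ((kL : ℝ) + (kR : ℝ)) ^ ((3 : ℝ) / 2) * (kL : ℝ) ^ (-(5 : ℝ) / 2) *
          (kR : ℝ) ^ (-(5 : ℝ) / 2) *
          ((mL : ℝ) + (mR : ℝ) - (kL : ℝ) - (kR : ℝ) + 1) ^ (-(5 : ℝ) / 2)
      ≤ C * ((mL : ℝ) + (mR : ℝ)) ^ ((3 : ℝ) / 2) * (mL : ℝ) ^ (-(5 : ℝ) / 2) *
          (mR : ℝ) ^ (-(5 : ℝ) / 2) := by
  set f : ℕ → ℝ := fun n => ((n : ℝ) + 1) ^ (-(5 / 4 : ℝ))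
  have hf : Summable f := summable_nat_add_one_rpow_neg (by norm_num)
  have hf0 : ∀ n, 0 ≤ f n := fun n => by positivity
  have hS : ∀ m : ℕ, ∑ k ∈ Icc ((m + 1) / 2) m, f (m - k) ≤ ∑' n, f n := fun m =>
    sum_comp_tsub_le_tsum hf hf0 fun k hk => (mem_Icc.1 hk).2
  refine ⟨32 * (∑' n, f n) ^ 2, by have := hf.tsum_pos hf0 0 (by simp [f]); positivity, ?_⟩
  intro mL mR hmL hmR
  set B := ((mL : ℝ) + (mR : ℝ)) ^ ((3 : ℝ) / 2) * (mL : ℝ) ^ (-(5 : ℝ) / 2) *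
    (mR : ℝ) ^ (-(5 : ℝ) / 2)
  calc _ ≤ ∑ kL ∈ Icc ((mL + 1) / 2) mL, ∑ kR ∈ Icc ((mR + 1) / 2) mR,
          32 * B * (f (mL - kL) * f (mR - kR)) :=
        sum_le_sum fun kL hkL => sum_le_sum fun kR hkR => overshoot_term_le_nat hmL hmR hkL hkR
    _ = 32 * B * ((∑ kL ∈ Icc ((mL + 1) / 2) mL, f (mL - kL)) *
          ∑ kR ∈ Icc ((mR + 1) / 2) mR, f (mR - kR)) := by
        rw [sum_mul_sum, mul_sum]; simp only [mul_sum]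
    _ ≤ 32 * B * ((∑' n, f n) * ∑' n, f n) := by gcongr <;> apply hS
    _ = _ := by ring
end
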